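/- For positive semidefinite operators ρ, σ on a finite-dimensional Hilbert space with supp ρ ⊆ supp σ, and α ≥ 1, the sandwiched quasi-entropy Q̃_α(ρ,σ) = Tr( σ^{(1−α)/(2α)} ρ σ^{(1−α)/(2α)} )^α satisfies Q̃_α(𝒫_σ(ρ), σ) ≤ Q̃_α(ρ, σ), where 𝒫_σ is the pinching map with respect to σ. -/

import Mathlib

open Matrix Finset
open scoped Kronecker ComplexOrder

/-- `T` is a completely positive trace-nonincreasing linear map between matrix algebras,
expressed via a Kraus representation `T X = ∑ i, K i * X * (K i)ᴴ` with `∑ i, (K i)ᴴ * K i ≤ 1`. -/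
def IsCPTNI {ι κ : Type} [Fintype ι] [DecidableEq ι] [Fintype κ] [DecidableEq κ]
    (T : Matrix ι ι ℂ →ₗ[ℂ] Matrix κ κ ℂ) : Prop :=
  ∃ (m : ℕ) (K : Fin m → Matrix κ ι ℂ),
    (∀ X, T X = ∑ i, K i * X * (K i)ᴴ) ∧
    ((1 : Matrix ι ι ℂ) - ∑ i, (K i)ᴴ * K i).PosSemidef

/-- `supp ρ ⊆ supp σ`, expressed as inclusion of kernels: `ker σ ⊆ ker ρ`. -/
def SuppLE {ι : Type} [Fintype ι] (ρ σ : Matrix ι ι ℂ) : Prop :=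
  ∀ v : ι → ℂ, σ.mulVec v = 0 → ρ.mulVec v = 0

/-- The orthogonal projection onto the eigenspace of `A` for the eigenvalue `μ`, as a matrix. -/
noncomputable def eigProj {ι : Type} [Fintype ι] [DecidableEq ι]
    (A : Matrix ι ι ℂ) (μ : ℂ) : Matrix ι ι ℂ :=
  let K := LinearMap.ker (Matrix.toEuclideanLin A - μ • LinearMap.id)
  Matrix.toEuclideanLin.symm (K.subtype ∘ₗ (K.orthogonalProjection).toLinearMap)

open scoped Classical in
/-- The pinching map `𝒫_A(X) = ∑_{μ ∈ spec A} P_μ X P_μ`, where the sum runs over the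
(distinct) eigenvalues of `A`, i.e. the roots of its characteristic polynomial. -/
noncomputable def pinching {ι : Type} [Fintype ι] [DecidableEq ι]
    (A X : Matrix ι ι ℂ) : Matrix ι ι ℂ :=
  ∑ μ ∈ A.charpoly.roots.toFinset, eigProj A μ * X * eigProj A μ

open scoped Classical in
/-- `Tr M^α` for a Hermitian matrix `M`, defined via its eigenvalues (real exponent `α`). -/
noncomputable def traceRpow {ι : Type} [Fintype ι] [DecidableEq ι]
    (M : Matrix ι ι ℂ) (α : ℝ) : ℝ :=
  if h : M.IsHermitian then ∑ i, (h.eigenvalues i) ^ α else 0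

open scoped Classical in
/-- `M^c` for a positive semidefinite matrix `M` and real exponent `c`, via functional
calculus on the support of `M` (eigenvalue `0` is sent to `0`). -/
noncomputable def psdRpow {ι : Type} [Fintype ι] [DecidableEq ι]
    (M : Matrix ι ι ℂ) (c : ℝ) : Matrix ι ι ℂ :=
  ∑ μ ∈ M.charpoly.roots.toFinset,
    (if 0 < μ.re then ((μ.re ^ c : ℝ) : ℂ) else 0) • eigProj M μ

/-- The sandwiched Rényi quasi-entropy
`Q̃_α(ρ,σ) = Tr (σ^{(1-α)/(2α)} ρ σ^{(1-α)/(2α)})^α`. -/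
noncomputable def sandwichedQ {ι : Type} [Fintype ι] [DecidableEq ι]
    (α : ℝ) (ρ σ : Matrix ι ι ℂ) : ℝ :=
  traceRpow (psdRpow σ ((1 - α) / (2 * α)) * ρ * psdRpow σ ((1 - α) / (2 * α))) α


/-!
Since `σ^γ`, `γ = (1 - α) / (2α)`, is a combination of the spectral projections `P_μ` of `σ`,
it commutes with the pinching, so `Q̃_α(𝒫_σ ρ, σ) = Tr (𝒫_σ M)^α` with `M = σ^γ ρ σ^γ`.
The pinching `X ↦ ∑ P_μ X P_μ` is unital and trace preserving; in eigenbases `(u_i)` of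
`𝒫_σ M` and `(v_j)` of `M` this makes the weights `∑_μ |⟪u_i, P_μ v_j⟫|²` a doubly stochastic
matrix carrying the eigenvalues of `M` to those of `𝒫_σ M`. Jensen's inequality for the
convex function `x ↦ x^α` on `[0, ∞)` then gives `Tr (𝒫_σ M)^α ≤ Tr M^α`.
-/

theorem ConvexOn.sum_map_mulVec_le {n : Type*} [Fintype n] [DecidableEq n]
    {t : Set ℝ} {f : ℝ → ℝ} (hf : ConvexOn ℝ t f) {S : Matrix n n ℝ} (hS : S ∈ doublyStochastic ℝ n)
    {x : n → ℝ} (hx : ∀ j, x j ∈ t) :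
    ∑ i, f ((S *ᵥ x) i) ≤ ∑ i, f (x i) :=
  calc ∑ i, f ((S *ᵥ x) i) ≤ ∑ i, ∑ j, S i j * f (x j) :=
        sum_le_sum fun i _ => hf.map_sum_le (fun j _ => nonneg_of_mem_doublyStochastic hS)
          (sum_row_of_mem_doublyStochastic hS i) fun j _ => hx j
    _ = ∑ j, (∑ i, S i j) * f (x j) := by simp only [sum_mul]; exact sum_comm
    _ = ∑ i, f (x i) := by simp only [sum_col_of_mem_doublyStochastic hS, one_mul]

namespace Matrix

section DoublyStochastic

variable {m n κ : Type*}

def sumNormSq (s : Finset κ) (W : κ → Matrix m n ℂ) : Matrix m n ℝ :=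
  of fun i j => ∑ k ∈ s, Complex.normSq (W k i j)

lemma mul_diagonal_mul_conjTranspose_apply_self [Fintype n] [DecidableEq n]
    (A : Matrix m n ℂ) (d : n → ℝ) (i : m) :
    (A * diagonal (fun j => (d j : ℂ)) * Aᴴ) i i = ∑ j, (Complex.normSq (A i j) * d j : ℝ) := by
  rw [mul_apply, Complex.ofReal_sum]
  refine sum_congr rfl fun j _ => ?_
  rw [mul_diagonal, conjTranspose_apply, Complex.ofReal_mul, ← Complex.mul_conj,
    Complex.star_def]
  ring

lemma mul_conjTranspose_apply_self [Fintype n] (A : Matrix m n ℂ) (i : m) :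
    (A * Aᴴ) i i = ∑ j, (Complex.normSq (A i j) : ℝ) := by
  simp only [mul_apply, conjTranspose_apply, Complex.ofReal_sum, Complex.star_def,
    Complex.mul_conj]

lemma conjTranspose_mul_apply_self [Fintype m] (A : Matrix m n ℂ) (j : n) :
    (Aᴴ * A) j j = ∑ i, (Complex.normSq (A i j) : ℝ) := by
  simp only [mul_apply, conjTranspose_apply, Complex.ofReal_sum, Complex.star_def,
    ← Complex.normSq_eq_conj_mul_self]

lemma sumNormSq_mem_doublyStochastic [Fintype n] [DecidableEq n] {s : Finset κ}
    {W : κ → Matrix n n ℂ} (h₁ : ∑ k ∈ s, W k * (W k)ᴴ = 1) (h₂ : ∑ k ∈ s, (W k)ᴴ * W k = 1) :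
    sumNormSq s W ∈ doublyStochastic ℝ n := by
  refine mem_doublyStochastic_iff_sum.mpr
    ⟨fun i j => sum_nonneg fun k _ => Complex.normSq_nonneg _, fun i => ?_, fun j => ?_⟩
  · have h := congrFun (congrFun h₁ i) i
    simp only [sum_apply, one_apply_eq, mul_conjTranspose_apply_self] at h
    simp only [sumNormSq, of_apply]
    rw [sum_comm]
    exact_mod_cast h
  · have h := congrFun (congrFun h₂ j) j
    simp only [sum_apply, one_apply_eq, conjTranspose_mul_apply_self] at h
    simp only [sumNormSq, of_apply]
    rw [sum_comm]
    exact_mod_cast h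

lemma eq_sumNormSq_mulVec_of_diagonal_eq [Fintype n] [DecidableEq m] [DecidableEq n]
    {s : Finset κ} {W : κ → Matrix m n ℂ} {e : m → ℝ} {d : n → ℝ}
    (h : diagonal (fun i => (e i : ℂ)) =
      ∑ k ∈ s, W k * diagonal (fun j => (d j : ℂ)) * (W k)ᴴ) :
    e = sumNormSq s W *ᵥ d := by
  funext i
  have hi := congrFun (congrFun h i) i
  simp only [diagonal_apply_eq, sum_apply, mul_diagonal_mul_conjTranspose_apply_self] at hi
  simp only [mulVec, dotProduct, sumNormSq, of_apply, sum_mul]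
  rw [sum_comm]
  exact_mod_cast hi

theorem IsHermitian.exists_doublyStochastic_eigenvalues_eq [Fintype n] [DecidableEq n]
    {M N : Matrix n n ℂ} (hM : M.IsHermitian) (hN : N.IsHermitian) {s : Finset κ}
    {K : κ → Matrix n n ℂ} (hNK : N = ∑ k ∈ s, K k * M * (K k)ᴴ)
    (h₁ : ∑ k ∈ s, K k * (K k)ᴴ = 1) (h₂ : ∑ k ∈ s, (K k)ᴴ * K k = 1) :
    ∃ S ∈ doublyStochastic ℝ n, hN.eigenvalues = S *ᵥ hM.eigenvalues := by
  set U : Matrix n n ℂ := ↑hN.eigenvectorUnitary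
  set V : Matrix n n ℂ := ↑hM.eigenvectorUnitary
  have hU : U * Uᴴ = 1 := Unitary.coe_mul_star_self hN.eigenvectorUnitary
  have hU' : Uᴴ * U = 1 := Unitary.coe_star_mul_self hN.eigenvectorUnitary
  have hV : V * Vᴴ = 1 := Unitary.coe_mul_star_self hM.eigenvectorUnitary
  have hV' : Vᴴ * V = 1 := Unitary.coe_star_mul_self hM.eigenvectorUnitary
  have hN_diag : diagonal (fun i => (hN.eigenvalues i : ℂ)) = Uᴴ * N * U :=
    hN.conjStarAlgAut_star_eigenvectorUnitary.symm.trans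
      (Unitary.conjStarAlgAut_star_apply _ _)
  have hM_diag : M = V * diagonal (fun j => (hM.eigenvalues j : ℂ)) * Vᴴ := hM.spectral_theorem
  refine ⟨sumNormSq s fun k => Uᴴ * K k * V,
    sumNormSq_mem_doublyStochastic ?_ ?_, eq_sumNormSq_mulVec_of_diagonal_eq ?_⟩
  · have hW (k : κ) : (Uᴴ * K k * V) * (Uᴴ * K k * V)ᴴ = Uᴴ * (K k * (K k)ᴴ) * U := by
      simp only [conjTranspose_mul, conjTranspose_conjTranspose, Matrix.mul_assoc]
      rw [← Matrix.mul_assoc V, hV, Matrix.one_mul]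
    rw [sum_congr rfl fun k _ => hW k, ← sum_mul, ← mul_sum, h₁, Matrix.mul_one, hU']
  · have hW (k : κ) : (Uᴴ * K k * V)ᴴ * (Uᴴ * K k * V) = Vᴴ * ((K k)ᴴ * K k) * V := by
      simp only [conjTranspose_mul, conjTranspose_conjTranspose, Matrix.mul_assoc]
      rw [← Matrix.mul_assoc U, hU, Matrix.one_mul]
    rw [sum_congr rfl fun k _ => hW k, ← sum_mul, ← mul_sum, h₂, Matrix.mul_one, hV']
  · rw [hN_diag, hNK, mul_sum, sum_mul]
    refine sum_congr rfl fun k _ => ?_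
    conv_lhs => rw [hM_diag]
    simp only [conjTranspose_mul, conjTranspose_conjTranspose, Matrix.mul_assoc]

theorem IsHermitian.sum_map_eigenvalues_le_of_kraus [Fintype n] [DecidableEq n]
    {M N : Matrix n n ℂ} (hM : M.IsHermitian) (hN : N.IsHermitian) {s : Finset κ}
    {K : κ → Matrix n n ℂ} (hNK : N = ∑ k ∈ s, K k * M * (K k)ᴴ)
    (h₁ : ∑ k ∈ s, K k * (K k)ᴴ = 1) (h₂ : ∑ k ∈ s, (K k)ᴴ * K k = 1)
    {t : Set ℝ} {f : ℝ → ℝ} (hf : ConvexOn ℝ t f) (ht : ∀ j, hM.eigenvalues j ∈ t) :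
    ∑ i, f (hN.eigenvalues i) ≤ ∑ i, f (hM.eigenvalues i) := by
  obtain ⟨S, hS, hNS⟩ := hM.exists_doublyStochastic_eigenvalues_eq hN hNK h₁ h₂
  rw [hNS]
  exact hf.sum_map_mulVec_le hS ht

end DoublyStochastic

section Pinching

variable {ι : Type} [Fintype ι] [DecidableEq ι]

lemma toEuclideanCLM_eigProj (A : Matrix ι ι ℂ) (μ : ℂ) :
    toEuclideanCLM (n := ι) (𝕜 := ℂ) (eigProj A μ) =
      (Module.End.eigenspace (toEuclideanLin A) μ).starProjection := by
  apply ContinuousLinearMap.coe_injective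
  rw [coe_toEuclideanCLM_eq_toEuclideanLin, eigProj, LinearEquiv.apply_symm_apply,
    Module.End.eigenspace_def]
  rfl

lemma isStarProjection_eigProj (A : Matrix ι ι ℂ) (μ : ℂ) :
    IsStarProjection (eigProj A μ) := by
  have h := isStarProjection_starProjection (U := Module.End.eigenspace (toEuclideanLin A) μ)
  rw [← toEuclideanCLM_eigProj] at h
  refine ⟨EquivLike.injective (toEuclideanCLM (n := ι) (𝕜 := ℂ)) ?_,
    EquivLike.injective (toEuclideanCLM (n := ι) (𝕜 := ℂ)) ?_⟩
  · rw [map_mul toEuclideanCLM, h.isIdempotentElem.eq]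
  · rw [map_star toEuclideanCLM, h.isSelfAdjoint.star_eq]

lemma eigProj_mul_self (A : Matrix ι ι ℂ) (μ : ℂ) :
    eigProj A μ * eigProj A μ = eigProj A μ :=
  (isStarProjection_eigProj A μ).isIdempotentElem.eq

lemma conjTranspose_eigProj (A : Matrix ι ι ℂ) (μ : ℂ) : (eigProj A μ)ᴴ = eigProj A μ :=
  (isStarProjection_eigProj A μ).isSelfAdjoint.star_eq

lemma IsHermitian.eigenspace_isOrtho {A : Matrix ι ι ℂ} (hA : A.IsHermitian) {μ ν : ℂ}
    (h : μ ≠ ν) :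
    Module.End.eigenspace (toEuclideanLin A) μ ⟂ Module.End.eigenspace (toEuclideanLin A) ν :=
  (isSymmetric_toEuclideanLin_iff.mpr hA).orthogonalFamily_eigenspaces.isOrtho h

lemma IsHermitian.eigenvectorBasis_mem_eigenspace {A : Matrix ι ι ℂ} (hA : A.IsHermitian)
    (i : ι) :
    hA.eigenvectorBasis i ∈ Module.End.eigenspace (toEuclideanLin A) (hA.eigenvalues i) := by
  rw [Module.End.mem_eigenspace_iff]
  apply WithLp.ofLp_injective
  rw [ofLp_toLpLin, WithLp.ofLp_smul, toLin'_apply, hA.mulVec_eigenvectorBasis,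
    RCLike.real_smul_eq_coe_smul (K := ℂ)]
  rfl

lemma eigProj_mul_eigProj_of_ne {A : Matrix ι ι ℂ} (hA : A.IsHermitian) {μ ν : ℂ}
    (h : μ ≠ ν) : eigProj A μ * eigProj A ν = 0 := by
  apply EquivLike.injective (toEuclideanCLM (n := ι) (𝕜 := ℂ))
  rw [map_mul toEuclideanCLM, map_zero, toEuclideanCLM_eigProj, toEuclideanCLM_eigProj]
  exact (hA.eigenspace_isOrtho h).starProjection_comp_starProjection

lemma sum_eigProj {A : Matrix ι ι ℂ} (hA : A.IsHermitian) :
    ∑ μ ∈ A.charpoly.roots.toFinset, eigProj A μ = 1 := by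
  apply EquivLike.injective (toEuclideanCLM (n := ι) (𝕜 := ℂ))
  rw [map_one toEuclideanCLM, map_sum toEuclideanCLM]
  simp only [toEuclideanCLM_eigProj]
  refine ContinuousLinearMap.coe_injective (hA.eigenvectorBasis.toBasis.ext fun i => ?_)
  have hi : (hA.eigenvalues i : ℂ) ∈ A.charpoly.roots.toFinset := by
    simp [hA.roots_charpoly_eq_eigenvalues]
  have hmem := hA.eigenvectorBasis_mem_eigenspace i
  simp only [OrthonormalBasis.coe_toBasis, ContinuousLinearMap.coe_coe, FunLike.coe_sum,
    Finset.sum_apply, one_apply_eq_self]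
  rw [Finset.sum_eq_single_of_mem _ hi]
  · exact Submodule.starProjection_eq_self_iff.mpr hmem
  · intro μ _ hμ
    exact (Submodule.starProjection_apply_eq_zero_iff _).mpr
      ((hA.eigenspace_isOrtho hμ).symm hmem)

lemma commute_eigProj {A : Matrix ι ι ℂ} (hA : A.IsHermitian) (μ ν : ℂ) :
    Commute (eigProj A μ) (eigProj A ν) := by
  rcases eq_or_ne μ ν with rfl | h
  · exact Commute.refl _
  · rw [Commute, SemiconjBy, eigProj_mul_eigProj_of_ne hA h,
      eigProj_mul_eigProj_of_ne hA h.symm]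

lemma commute_psdRpow_eigProj {A : Matrix ι ι ℂ} (hA : A.IsHermitian) (c : ℝ) (μ : ℂ) :
    Commute (psdRpow A c) (eigProj A μ) :=
  Commute.sum_left _ _ _ fun ν _ => (commute_eigProj hA ν μ).smul_left _

lemma isHermitian_psdRpow (A : Matrix ι ι ℂ) (c : ℝ) : (psdRpow A c).IsHermitian := by
  rw [IsHermitian, psdRpow, conjTranspose_sum]
  refine sum_congr rfl fun μ _ => ?_
  rw [conjTranspose_smul, conjTranspose_eigProj]
  split_ifs <;> simp

lemma pinching_eq_sum_mul_mul_conjTranspose (A X : Matrix ι ι ℂ) :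
    pinching A X = ∑ μ ∈ A.charpoly.roots.toFinset, eigProj A μ * X * (eigProj A μ)ᴴ := by
  simp only [pinching, conjTranspose_eigProj]

lemma isHermitian_pinching (A : Matrix ι ι ℂ) {X : Matrix ι ι ℂ} (hX : X.IsHermitian) :
    (pinching A X).IsHermitian := by
  rw [pinching_eq_sum_mul_mul_conjTranspose]
  exact (isSelfAdjoint_sum _ fun μ _ =>
    (isHermitian_mul_mul_conjTranspose _ hX).isSelfAdjoint).isHermitian

lemma mul_pinching_mul {A B C : Matrix ι ι ℂ} (hB : ∀ μ, Commute B (eigProj A μ))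
    (hC : ∀ μ, Commute C (eigProj A μ)) (X : Matrix ι ι ℂ) :
    B * pinching A X * C = pinching A (B * X * C) := by
  simp only [pinching, mul_sum, sum_mul]
  refine sum_congr rfl fun μ _ => ?_
  calc B * (eigProj A μ * X * eigProj A μ) * C
      = (B * eigProj A μ) * X * (eigProj A μ * C) := by simp only [Matrix.mul_assoc]
    _ = (eigProj A μ * B) * X * (C * eigProj A μ) := by rw [(hB μ).eq, (hC μ).eq]
    _ = eigProj A μ * (B * X * C) * eigProj A μ := by simp only [Matrix.mul_assoc]

lemma traceRpow_pinching_le {A M : Matrix ι ι ℂ} (hA : A.IsHermitian) (hM : M.PosSemidef)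
    {α : ℝ} (hα : 1 ≤ α) : traceRpow (pinching A M) α ≤ traceRpow M α := by
  have hN := isHermitian_pinching A hM.1
  rw [traceRpow, dif_pos hN, traceRpow, dif_pos hM.1]
  have hK : ∑ μ ∈ A.charpoly.roots.toFinset, eigProj A μ * (eigProj A μ)ᴴ = 1 := by
    simp only [conjTranspose_eigProj, eigProj_mul_self, sum_eigProj hA]
  have hK' : ∑ μ ∈ A.charpoly.roots.toFinset, (eigProj A μ)ᴴ * eigProj A μ = 1 := by
    simp only [conjTranspose_eigProj, eigProj_mul_self, sum_eigProj hA]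
  exact hM.1.sum_map_eigenvalues_le_of_kraus hN (pinching_eq_sum_mul_mul_conjTranspose A M)
    hK hK' (convexOn_rpow hα) hM.eigenvalues_nonneg

end Pinching

end Matrix

theorem sandwichedQ_pinching_le_general {ι : Type} [Fintype ι] [DecidableEq ι]
    (α : ℝ) (hα : 1 ≤ α)
    (ρ σ : Matrix ι ι ℂ)
    (hρ : ρ.PosSemidef) (hσ : σ.PosSemidef) :
    sandwichedQ α (pinching σ ρ) σ ≤ sandwichedQ α ρ σ := by
  set B := psdRpow σ ((1 - α) / (2 * α))
  have hB := commute_psdRpow_eigProj hσ.1 ((1 - α) / (2 * α))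
  have hBH : Bᴴ = B := isHermitian_psdRpow σ _
  have hBρB : (B * ρ * B).PosSemidef := by
    simpa only [hBH] using hρ.mul_mul_conjTranspose_same B
  rw [sandwichedQ, sandwichedQ, mul_pinching_mul hB hB]
  exact traceRpow_pinching_le hσ.1 hBρB hα

/-- The sandwiched Rényi quasi-entropy does not increase in the first argument under pinching
with respect to the second argument: `Q̃_α(𝒫_σ(ρ), σ) ≤ Q̃_α(ρ, σ)` for `α ≥ 1`. -/
theorem sandwichedQ_pinching_le {ι : Type} [Fintype ι] [DecidableEq ι]
    (α : ℝ) (hα : 1 ≤ α)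
    (ρ σ : Matrix ι ι ℂ)
    (hρ : ρ.PosSemidef) (hσ : σ.PosSemidef) (hsupp : SuppLE ρ σ) :
    sandwichedQ α (pinching σ ρ) σ ≤ sandwichedQ α ρ σ :=
  sandwichedQ_pinching_le_general α hα ρ σ hρ hσ
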